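/- arXiv:1910.03919 — 3 statements merged into one kernel-verified Lean document; each statement's English description precedes it below -/
import Mathlib

section
/- For every positive integer n and every even integer d ≥ 2, L(S_{n,d}) is a proper subset of LimsupEven_{n,d}: every word accepted by S_{n,d} belongs to LimsupEven_{n,d}, and there exists a word in LimsupEven_{n,d} not accepted by S_{n,d}. -/
namespace PGSep

/-- Letters of the alphabet `Σ_{n,d}`: triples (source node, priority, target node). -/
abbrev Letter : Type := ℕ × ℕ × ℕ

/-- The priority component of a letter. -/
def prio (e : Letter) : ℕ := e.2.1

/-- Membership in the alphabet `Σ_{n,d} = {1,…,n} × {1,…,d} × {1,…,n}`. -/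
def InAlph (n d : ℕ) (e : Letter) : Prop :=
  1 ≤ e.1 ∧ e.1 ≤ n ∧ 1 ≤ e.2.1 ∧ e.2.1 ≤ d ∧ 1 ≤ e.2.2 ∧ e.2.2 ≤ n

/-- Infinite words over the alphabet. -/
abbrev Word : Type := ℕ → Letter

/-- `p` occurs infinitely often among the values of `f`. -/
def InfOft (f : ℕ → ℕ) (p : ℕ) : Prop := ∀ N, ∃ k, N ≤ k ∧ f k = p

/-- The largest value occurring infinitely often in `f` exists and is even. -/
def MaxInfOftEven (f : ℕ → ℕ) : Prop :=
  ∃ p, Even p ∧ InfOft f p ∧ ∀ q, InfOft f q → q ≤ p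

/-- The largest value occurring infinitely often in `f` exists and is odd. -/
def MaxInfOftOdd (f : ℕ → ℕ) : Prop :=
  ∃ p, Odd p ∧ InfOft f p ∧ ∀ q, InfOft f q → q ≤ p

/-- `LimsupEven_{n,d}`: the largest priority occurring infinitely often is even. -/
def LimsupEven (w : Word) : Prop := MaxInfOftEven fun k => prio (w k)

/-- `LimsupOdd_{n,d}`: the largest priority occurring infinitely often is odd. -/
def LimsupOdd (w : Word) : Prop := MaxInfOftOdd fun k => prio (w k)

/-- An infinite sequence of triples is a path in the edge set `E`. -/
def IsPathSeq {V : Type*} (E : Set (V × ℕ × V)) (w : ℕ → V × ℕ × V) : Prop :=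
  ∀ k, w k ∈ E ∧ (w k).2.2 = (w (k + 1)).1

/-- A game graph with `n` nodes (the set {1,…,n}) and priorities up to `d`. -/
structure GameGraph (n d : ℕ) where
  /-- nodes owned by Even (V_□) -/
  evenN : Set ℕ
  /-- nodes owned by Odd (V_△) -/
  oddN : Set ℕ
  /-- the starting node -/
  start : ℕ
  /-- the set of edges (a subset of the alphabet) -/
  edges : Set Letter
  union_eq : evenN ∪ oddN = Set.Icc 1 n
  disj : Disjoint evenN oddN
  start_mem : start ∈ Set.Icc 1 n
  edges_alph : ∀ e ∈ edges, InAlph n d e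
  total : ∀ v ∈ Set.Icc (1 : ℕ) n, ∃ e ∈ edges, e.1 = v

/-- A play in a game graph: an infinite path starting at the starting node,
identified with the word listing its consecutive edges. -/
def IsPlay {n d : ℕ} (G : GameGraph n d) (w : Word) : Prop :=
  (w 0).1 = G.start ∧ IsPathSeq G.edges w

/-- A positional strategy for Even: one outgoing edge for each node of `V_□`. -/
structure EPosStrat {n d : ℕ} (G : GameGraph n d) where
  choice : ℕ → Letter
  mem : ∀ v ∈ G.evenN, choice v ∈ G.edges ∧ (choice v).1 = v

/-- A positional strategy for Odd: one outgoing edge for each node of `V_△`. -/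
structure OPosStrat {n d : ℕ} (G : GameGraph n d) where
  choice : ℕ → Letter
  mem : ∀ v ∈ G.oddN, choice v ∈ G.edges ∧ (choice v).1 = v

/-- A play arises from a positional strategy of Even. -/
def ArisesE {n d : ℕ} {G : GameGraph n d} (τ : EPosStrat G) (w : Word) : Prop :=
  IsPlay G w ∧ ∀ k, (w k).1 ∈ G.evenN → w k = τ.choice (w k).1

/-- A play arises from a positional strategy of Odd. -/
def ArisesO {n d : ℕ} {G : GameGraph n d} (τ : OPosStrat G) (w : Word) : Prop :=
  IsPlay G w ∧ ∀ k, (w k).1 ∈ G.oddN → w k = τ.choice (w k).1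

/-- A positional strategy for Even is winning: every arising play is won by Even. -/
def EWinningPos {n d : ℕ} {G : GameGraph n d} (τ : EPosStrat G) : Prop :=
  ∀ w, ArisesE τ w → LimsupEven w

/-- A positional strategy for Odd is winning: every arising play is won by Odd
(i.e. not won by Even). -/
def OWinningPos {n d : ℕ} {G : GameGraph n d} (τ : OPosStrat G) : Prop :=
  ∀ w, ArisesO τ w → ¬ LimsupEven w

/-- `PosEven_{n,d}`: plays arising from positional winning strategies for Even. -/
def PosEven (n d : ℕ) : Set Word :=
  {w | ∃ G : GameGraph n d, ∃ τ : EPosStrat G, EWinningPos τ ∧ ArisesE τ w}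

/-- `PosOdd_{n,d}`: plays arising from positional winning strategies for Odd. -/
def PosOdd (n d : ℕ) : Set Word :=
  {w | ∃ G : GameGraph n d, ∃ τ : OPosStrat G, OWinningPos τ ∧ ArisesO τ w}

/-- A nondeterministic automaton reading letters, with state space `Q`. -/
structure Automaton (Q : Type*) where
  init : Q
  trans : Set (Q × Letter × ℕ × Q)

/-- Transitions: (source state, letter, emitted priority, target state). -/
abbrev Trans (Q : Type*) : Type _ := Q × Letter × ℕ × Q

def tSrc {Q : Type*} (t : Trans Q) : Q := t.1
def tLetter {Q : Type*} (t : Trans Q) : Letter := t.2.1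
def tPrio {Q : Type*} (t : Trans Q) : ℕ := t.2.2.1
def tTgt {Q : Type*} (t : Trans Q) : Q := t.2.2.2

/-- `A` is a (total) nondeterministic parity automaton over `Σ_{n,d}` with
transition priorities in `{1,…,d'}`. -/
def IsParityAutomaton (n d d' : ℕ) {Q : Type*} (A : Automaton Q) : Prop :=
  (∀ t ∈ A.trans, InAlph n d (tLetter t) ∧ 1 ≤ tPrio t ∧ tPrio t ≤ d') ∧
  (∀ (s : Q) (e : Letter), InAlph n d e → ∃ p s', (s, e, p, s') ∈ A.trans)

/-- A run of the automaton: an infinite path of transitions starting at `init`. -/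
def IsRun {Q : Type*} (A : Automaton Q) (ρ : ℕ → Trans Q) : Prop :=
  tSrc (ρ 0) = A.init ∧ ∀ k, ρ k ∈ A.trans ∧ tTgt (ρ k) = tSrc (ρ (k + 1))

/-- The run `ρ` reads the word `w`. -/
def Reads {Q : Type*} (ρ : ℕ → Trans Q) (w : Word) : Prop := ∀ k, tLetter (ρ k) = w k

/-- A run is accepting: the largest priority labelling infinitely many
of its transitions is even. -/
def Accepting {Q : Type*} (ρ : ℕ → Trans Q) : Prop := MaxInfOftEven fun k => tPrio (ρ k)

/-- The language of the automaton. -/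
def Lang {Q : Type*} (A : Automaton Q) : Set Word :=
  {w | ∃ ρ, IsRun A ρ ∧ Reads ρ w ∧ Accepting ρ}

/-- A transition strategy for `A`, resolving nondeterminism based on the word read
so far, the current state, and the next letter. -/
structure TransStrat (n d : ℕ) {Q : Type*} (A : Automaton Q) where
  app : List Letter → Q → Letter → Trans Q
  valid : ∀ w s e, InAlph n d e →
    app w s e ∈ A.trans ∧ tSrc (app w s e) = s ∧ tLetter (app w s e) = e

/-- The state reached after reading the first `k` letters of `w` following `σ`. -/
def stateAt {n d : ℕ} {Q : Type*} (A : Automaton Q) (σ : TransStrat n d A) (w : Word) :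
    ℕ → Q
  | 0 => A.init
  | k + 1 => tTgt (σ.app ((List.range k).map w) (stateAt A σ w k) (w k))

/-- The run obtained by following the transition strategy `σ` while reading `w`. -/
def followRun {n d : ℕ} {Q : Type*} (A : Automaton Q) (σ : TransStrat n d A) (w : Word)
    (k : ℕ) : Trans Q :=
  σ.app ((List.range k).map w) (stateAt A σ w k) (w k)

/-- The transition strategy `σ` is winning for the set of words `L`. -/
def WinningFor {n d : ℕ} {Q : Type*} (A : Automaton Q) (σ : TransStrat n d A)
    (L : Set Word) : Prop :=
  ∀ w ∈ L, Accepting (followRun A σ w)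

/-- `A` is good for games: some transition strategy is winning for the whole `L(A)`. -/
def GFG (n d : ℕ) {Q : Type*} (A : Automaton Q) : Prop :=
  ∃ σ : TransStrat n d A, WinningFor A σ (Lang A)

/-- `A` is a parity-games separator. -/
def PGSeparator (n d : ℕ) {Q : Type*} (A : Automaton Q) : Prop :=
  (∀ w ∈ PosEven n d, w ∈ Lang A) ∧ ∀ w ∈ PosOdd n d, w ∉ Lang A

/-- `A` is a strong PG separator: additionally it rejects all of `LimsupOdd`. -/
def StrongPGSeparator (n d : ℕ) {Q : Type*} (A : Automaton Q) : Prop :=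
  PGSeparator n d A ∧ ∀ w : Word, LimsupOdd w → w ∉ Lang A

/-- `A` is suitable for parity games (SFPG). -/
def SFPG (n d : ℕ) {Q : Type*} (A : Automaton Q) : Prop :=
  PGSeparator n d A ∧
  ∀ (G : GameGraph n d) (τ : EPosStrat G), EWinningPos τ →
    ∃ σ : TransStrat n d A, WinningFor A σ {w | ArisesE τ w}

/-- A generic game with parity winning condition, over an arbitrary set of nodes. -/
structure PGame (V : Type*) where
  evenOwn : V → Prop
  start : V
  edges : Set (V × ℕ × V)

/-- A play of a generic game. -/
def PGame.IsPlay {V : Type*} (g : PGame V) (w : ℕ → V × ℕ × V) : Prop :=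
  (w 0).1 = g.start ∧ IsPathSeq g.edges w

/-- `IsFinPath E u l v`: the list of edges `l` is a finite path from `u` to `v`. -/
def IsFinPath {V : Type*} (E : Set (V × ℕ × V)) : V → List (V × ℕ × V) → V → Prop
  | u, [], v => u = v
  | u, e :: l, v => e ∈ E ∧ e.1 = u ∧ IsFinPath E e.2.2 l v

/-- Even has a winning strategy in the game `g`. -/
def EvenWins {V : Type*} (g : PGame V) : Prop :=
  ∃ str : List (V × ℕ × V) → V × ℕ × V,
    (∀ l v, IsFinPath g.edges g.start l v → g.evenOwn v →
      str l ∈ g.edges ∧ (str l).1 = v) ∧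
    ∀ w, g.IsPlay w → (∀ k, g.evenOwn ((w k).1) → w k = str ((List.range k).map w)) →
      MaxInfOftEven fun k => (w k).2.1

/-- Odd has a winning strategy in the game `g`. -/
def OddWins {V : Type*} (g : PGame V) : Prop :=
  ∃ str : List (V × ℕ × V) → V × ℕ × V,
    (∀ l v, IsFinPath g.edges g.start l v → ¬ g.evenOwn v →
      str l ∈ g.edges ∧ (str l).1 = v) ∧
    ∀ w, g.IsPlay w → (∀ k, ¬ g.evenOwn ((w k).1) → w k = str ((List.range k).map w)) →
      ¬ MaxInfOftEven fun k => (w k).2.1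

/-- Even has a strategy winning for the safety condition `safe` in the game `g`. -/
def EvenWinsSafety {V : Type*} (g : PGame V) (safe : V → Prop) : Prop :=
  ∃ str : List (V × ℕ × V) → V × ℕ × V,
    (∀ l v, IsFinPath g.edges g.start l v → g.evenOwn v →
      str l ∈ g.edges ∧ (str l).1 = v) ∧
    ∀ w, g.IsPlay w → (∀ k, g.evenOwn ((w k).1) → w k = str ((List.range k).map w)) →
      ∀ k, safe (w k).2.2

/-- A game graph viewed as a generic game. -/
def GameGraph.toPGame {n d : ℕ} (G : GameGraph n d) : PGame ℕ :=
  { evenOwn := fun v => v ∈ G.evenN, start := G.start, edges := G.edges }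

/-- The synchronized product `G × A`. -/
def prodGame {n d : ℕ} {Q : Type*} (G : GameGraph n d) (A : Automaton Q) :
    PGame ((ℕ ⊕ Letter) × Q) where
  evenOwn := fun x => match x.1 with
    | Sum.inl v => v ∈ G.evenN
    | Sum.inr _ => True
  start := (Sum.inl G.start, A.init)
  edges := {ed | (∃ e ∈ G.edges, ∃ s : Q, ed = ((Sum.inl e.1, s), 1, (Sum.inr e, s))) ∨
    (∃ t ∈ A.trans, tLetter t ∈ G.edges ∧
      ed = ((Sum.inr (tLetter t), tSrc t), tPrio t, (Sum.inl (tLetter t).2.2, tTgt t)))}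

/-- The number of registers: `rn(n) = 1 + ⌊log₂ n⌋`. -/
def rn (n : ℕ) : ℕ := 1 + Nat.log 2 n

/-- Update of a register state (bottom register first) by priority `p`:
the maximal prefix of registers smaller than `p` is replaced by `p`. -/
def update (p : ℕ) : List ℕ → List ℕ
  | [] => []
  | r :: l => if r < p then p :: update p l else r :: l

/-- The `k`-reset (registers numbered from 1, bottom first): the `k`-th register is
removed and a `1` is inserted at the bottom. -/
def resetReg (k : ℕ) (l : List ℕ) : List ℕ := 1 :: l.eraseIdx (k - 1)

/-- The value of register number `k` (registers numbered from 1, bottom first). -/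
def regVal (k : ℕ) (l : List ℕ) : ℕ := l.getD (k - 1) 0

/-- Lehtinen's register automaton `R_{n,d}`. -/
def Raut (n d : ℕ) : Automaton (List ℕ) where
  init := List.replicate (rn n) 1
  trans := {t | ∃ s e, InAlph n d e ∧
    (t = (s, e, 1, update (prio e) s) ∨
     ∃ k, 1 ≤ k ∧ k ≤ rn n ∧
       ((Even (regVal k (update (prio e) s)) ∧
           t = (s, e, 2 * k, resetReg k (update (prio e) s))) ∨
        (Odd (regVal k (update (prio e) s)) ∧
           t = (s, e, 2 * k + 1, resetReg k (update (prio e) s)))))}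

/-- States of the safety automaton `S_{n,d}`: `none` is the rejecting state `rej`;
otherwise a state of `R_{n,d}` together with a tuple of counters (bottom first:
`c_0` is the head). -/
abbrev SState : Type := Option (List ℕ × List ℕ)

/-- Counters `c_0,…,c_{k-1}` are reset to `c0`; the rest is kept. -/
def bumpKeep (c0 k : ℕ) (c : List ℕ) : List ℕ := List.replicate k c0 ++ c.drop k

/-- Counters `c_0,…,c_{k-1}` are reset to `c0`; counter `c_k` is decremented. -/
def bumpDec (c0 k : ℕ) (c : List ℕ) : List ℕ :=
  List.replicate k c0 ++ ((c.getD k 0 - 1) :: c.drop (k + 1))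

/-- The safety automaton `S_{n,d}`. -/
def Saut (n d : ℕ) : Automaton SState where
  init := some (List.replicate (rn n) 1, List.replicate (rn n + 1) n)
  trans := {t |
    (∃ e, InAlph n d e ∧ t = (none, e, 1, none)) ∨
    (∃ s c e k s', 1 ≤ k ∧ (s, e, 2 * k, s') ∈ (Raut n d).trans ∧
       t = (some (s, c), e, 2, some (s', bumpKeep n k c))) ∨
    (∃ s c e k s', (s, e, 2 * k + 1, s') ∈ (Raut n d).trans ∧
       ((1 < c.getD k 0 ∧ t = (some (s, c), e, 2, some (s', bumpDec n k c))) ∨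
        (c.getD k 0 = 1 ∧ t = (some (s, c), e, 1, none))))}

/-- `bad(ρ) ≤ B` for an infinite run `ρ`: every infix containing no transition of
priority above an odd `p` contains at most `B` transitions of priority `p`. -/
def badLE {Q : Type*} (ρ : ℕ → Trans Q) (B : ℕ) : Prop :=
  ∀ a b p, Odd p → (∀ i, a ≤ i → i < b → tPrio (ρ i) ≤ p) →
    ((Finset.Ico a b).filter fun i => tPrio (ρ i) = p).card ≤ B

/-- `bad(ρ) ≤ B` for a partial run of length `L` (possibly infinite). -/
def badLEPartial {Q : Type*} (ρ : ℕ → Trans Q) (L : ℕ∞) (B : ℕ) : Prop :=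
  ∀ (a b p : ℕ), Odd p → (b : ℕ∞) ≤ L → (∀ i, a ≤ i → i < b → tPrio (ρ i) ≤ p) →
    ((Finset.Ico a b).filter fun i => tPrio (ρ i) = p).card ≤ B

/-- The strategy subgraph `G_τ`: all outgoing edges of Odd's nodes, and only the
chosen edge from each of Even's nodes. -/
def GtauEdges {n d : ℕ} (G : GameGraph n d) (τ : EPosStrat G) : Set Letter :=
  {e | e ∈ G.edges ∧ (e.1 ∈ G.evenN → e = τ.choice e.1)}

/-- One step along an edge of `E`. -/
def StepRel (E : Set Letter) (u v : ℕ) : Prop := ∃ p, (u, p, v) ∈ E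

/-- Reachability along edges of `E`. -/
def Reach (E : Set Letter) : ℕ → ℕ → Prop := Relation.ReflTransGen (StepRel E)

/-- `V_τ`: the nodes of `G_τ` reachable from the starting node. -/
def Vtau {n d : ℕ} (G : GameGraph n d) (τ : EPosStrat G) : Set ℕ :=
  {v | Reach (GtauEdges G τ) G.start v}

/-- `G_{S,p}`: edges of `E` inside `S` of priority at most `p`. -/
def subEdges (E : Set Letter) (S : Set ℕ) (p : ℕ) : Set Letter :=
  {e | e ∈ E ∧ e.1 ∈ S ∧ e.2.2 ∈ S ∧ prio e ≤ p}

/-- `parts` lists the strongly connected components of the graph `(S, E)` in a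
topological order. -/
def IsSCCDecomp (E : Set Letter) (S : Set ℕ) (parts : List (Set ℕ)) : Prop :=
  (∀ P ∈ parts, P.Nonempty ∧ P ⊆ S) ∧
  (∀ v ∈ S, ∃ P ∈ parts, v ∈ P) ∧
  List.Pairwise Disjoint parts ∧
  (∀ P ∈ parts, ∀ u ∈ P, ∀ v ∈ S, ((Reach E u v ∧ Reach E v u) ↔ v ∈ P)) ∧
  (∀ (i j : ℕ) (hi : i < parts.length) (hj : j < parts.length), i < j →
    ∀ u ∈ parts.get ⟨j, hj⟩, ∀ v ∈ parts.get ⟨i, hi⟩, ¬ StepRel E u v)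

/-- The nodes of a tree given by the children function `ch` with root `(r, R)`. -/
inductive TreeNode (ch : ℕ → Set ℕ → List (Set ℕ)) (r : ℕ) (R : Set ℕ) :
    ℕ → Set ℕ → Prop where
  | root : TreeNode ch r R r R
  | child {k : ℕ} {S T : Set ℕ} : TreeNode ch r R (k + 1) S → T ∈ ch (k + 1) S →
      TreeNode ch r R k T

/-- `ch` describes a game tree of `G_τ`: the root is `(⌈d/2⌉, V_τ)`, and the children
of a node `(k+1, S)` are the SCCs of `G_{S,2(k+1)-1}` in topological order. -/
def IsGameTree {n d : ℕ} (G : GameGraph n d) (τ : EPosStrat G)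
    (ch : ℕ → Set ℕ → List (Set ℕ)) : Prop :=
  ∀ k S, TreeNode ch ((d + 1) / 2) (Vtau G τ) (k + 1) S →
    IsSCCDecomp (subEdges (GtauEdges G τ) S (2 * (k + 1) - 1)) S (ch (k + 1) S)

/-- `fstl ch l k S`: the leftmost descendant of the node `(k, S)` on level `l`
(for `l ≤ k`). -/
def fstl (ch : ℕ → Set ℕ → List (Set ℕ)) (l : ℕ) : ℕ → Set ℕ → Set ℕ
  | 0, S => S
  | k + 1, S => if l = k + 1 then S else fstl ch l k ((ch (k + 1) S).headD ∅)

/-!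
An accepting run of `S_{n,d}` never enters `rej` (from there on only priority `1` occurs), so it is
a run of `R_{n,d}` carrying counters. If the largest `R`-priority occurring infinitely often were
odd, say `2u+1`, the counter `c_u` would eventually never increase and drop infinitely often; so it
is even, `2m`. If the largest letter priority `P` occurring infinitely often were odd, then every
occurrence of `P` pushes register `m` to at least `P` until its next reset, which is even, so it
removes a register above `P` from the bottom `m` registers; their number never increases, which is
absurd.

Conversely, a letter of priority `1` strictly decreases the bounded quantity
`n ^ (rn n + 1) * #{even registers} + ∑ i, (c_i - 1) * n ^ i`, so no run avoiding `rej` survives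
arbitrarily long blocks of such letters. The word with priority `2` exactly at the perfect squares
has such blocks, and lies in `LimsupEven`.
-/

open Filter

section Sequences

variable {f : ℕ → ℕ} {D : ℕ}

theorem infOft_iff_frequently {p : ℕ} : InfOft f p ↔ ∃ᶠ k in atTop, f k = p :=
  frequently_atTop.symm

theorem eventually_infOft_apply (hD : ∀ k, f k ≤ D) : ∀ᶠ k in atTop, InfOft f (f k) := by
  have h : ∀ q ∈ Finset.range (D + 1), ∀ᶠ k in atTop, f k = q → InfOft f q := by
    intro q _
    by_cases hq : InfOft f q
    · exact Eventually.of_forall fun _ _ => hq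
    · rw [infOft_iff_frequently, not_frequently] at hq
      exact hq.mono fun k hk hk' => absurd hk' hk
  filter_upwards [(eventually_all_finset _).2 h] with k hk
  exact hk (f k) (Finset.mem_range.2 (Nat.lt_succ_of_le (hD k))) rfl

theorem exists_maxInfOft (hD : ∀ k, f k ≤ D) : ∃ p, InfOft f p ∧ ∀ q, InfOft f q → q ≤ p := by
  classical
  obtain ⟨k, hk⟩ := (eventually_infOft_apply hD).exists
  have hle : ∀ q, InfOft f q → q ≤ D := fun q hq => by
    obtain ⟨k, -, rfl⟩ := hq 0
    exact hD k
  exact ⟨Nat.findGreatest (InfOft f) D, Nat.findGreatest_spec (hle _ hk) hk,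
    fun q hq => Nat.le_findGreatest (hle q hq) hq⟩

theorem eventually_le_of_forall_infOft_le (hD : ∀ k, f k ≤ D) {p : ℕ}
    (hp : ∀ q, InfOft f q → q ≤ p) : ∀ᶠ k in atTop, f k ≤ p :=
  (eventually_infOft_apply hD).mono fun _ hk => hp _ hk

theorem not_frequently_succ_lt_of_eventually_succ_le (h : ∀ᶠ k in atTop, f (k + 1) ≤ f k) :
    ¬ ∃ᶠ k in atTop, f (k + 1) < f k := by
  classical
  obtain ⟨N, hN⟩ := eventually_atTop.1 h
  have hanti := antitoneOn_nat_Ici_of_succ_le hN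
  have hex : ∃ v, ∃ k, N ≤ k ∧ f k = v := ⟨_, N, le_rfl, rfl⟩
  obtain ⟨m, hm, hmin⟩ := Nat.find_spec hex
  rw [not_frequently]
  filter_upwards [eventually_ge_atTop m] with k hk
  have h₁ : f k ≤ f m := hanti (Set.mem_Ici.2 hm) (Set.mem_Ici.2 (hm.trans hk)) hk
  have h₂ : f m ≤ f (k + 1) := hmin ▸ Nat.find_min' hex ⟨k + 1, by omega, rfl⟩
  omega

theorem frequently_and_of_propagate {Q S : ℕ → Prop} (hQ : ∃ᶠ k in atTop, Q k)
    (hstep : ∀ᶠ k in atTop, Q k → ¬ S k → Q (k + 1)) (hS : ∃ᶠ k in atTop, S k) :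
    ∃ᶠ k in atTop, Q k ∧ S k := by
  classical
  obtain ⟨N, hN⟩ := eventually_atTop.1 hstep
  rw [frequently_atTop] at hQ hS ⊢
  intro a
  obtain ⟨i, hi, hQi⟩ := hQ (max a N)
  have hex : ∃ t, i ≤ t ∧ S t := hS i
  obtain ⟨hit, hSt⟩ := Nat.find_spec hex
  have hQt : ∀ k, i ≤ k → k ≤ Nat.find hex → Q k := by
    intro k hik
    induction k, hik using Nat.le_induction with
    | base => exact fun _ => hQi
    | succ k hik ih =>
      intro hk
      exact hN k (by omega) (ih (by omega)) fun hSk => Nat.find_min hex (by omega) ⟨hik, hSk⟩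
  exact ⟨Nat.find hex, by omega, hQt _ hit le_rfl, hSt⟩

theorem add_le_of_forall_succ_lt {t L : ℕ} (h : ∀ k, t ≤ k → k < t + L → f (k + 1) < f k) :
    f (t + L) + L ≤ f t := by
  induction L with
  | zero => simp
  | succ L ih =>
    have h₁ := ih fun k hk hkL => h k hk (by omega)
    have h₂ := h (t + L) (by omega) (by omega)
    show f (t + L + 1) + (L + 1) ≤ f t
    omega

end Sequences

section Lists

theorem update_eq_map_max {p : ℕ} : ∀ {l : List ℕ}, l.Pairwise (· ≤ ·) →
    update p l = l.map (max p)
  | [], _ => rfl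
  | a :: l, hl => by
    rw [List.pairwise_cons] at hl
    by_cases ha : a < p
    · simp [update, ha, update_eq_map_max hl.2, ha.le]
    · have hmax : ∀ x ∈ a :: l, max p x = x := fun x hx => max_eq_right <| by
        rcases List.mem_cons.1 hx with rfl | hx
        · omega
        · exact (Nat.le_of_not_lt ha).trans (hl.1 x hx)
      rw [List.map_congr_left hmax, List.map_id']
      simp [update, ha]

theorem update_one : ∀ {l : List ℕ}, (∀ x ∈ l, 1 ≤ x) → update 1 l = l
  | [], _ => rfl
  | a :: l, hl => by
    have := hl a (by simp)
    simp [update, show ¬ a < 1 by omega]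

theorem take_resetReg {k m : ℕ} (l : List ℕ) (hk : 1 ≤ k) (hkm : k ≤ m) :
    (resetReg k l).take m = resetReg k (l.take m) := by
  obtain ⟨m, rfl⟩ : ∃ m', m = m' + 1 := ⟨m - 1, by omega⟩
  simp only [resetReg, List.take_succ_cons, List.cons.injEq, true_and]
  exact List.ext_getElem (by grind) (by grind)

theorem resetReg_perm {k : ℕ} {l : List ℕ} (hk : 1 ≤ k) (hkl : k ≤ l.length) :
    (resetReg k l).Perm (l.set (k - 1) 1) :=
  (List.set_perm_cons_eraseIdx (by omega) 1).symm

theorem countP_resetReg (p : ℕ → Bool) {k : ℕ} {l : List ℕ} (hk : 1 ≤ k) (hkl : k ≤ l.length) :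
    (resetReg k l).countP p + (if p (regVal k l) then 1 else 0) =
      l.countP p + (if p 1 then 1 else 0) := by
  have hle := List.boole_getElem_le_countP (p := p) (l := l) (i := k - 1) (by omega)
  rw [(resetReg_perm hk hkl).countP_eq, List.countP_set (by omega), regVal,
    List.getD_eq_getElem _ _ (by omega)]
  omega

theorem countP_take_resetReg_add (p : ℕ → Bool) {k m : ℕ} {l : List ℕ} (hk : 1 ≤ k)
    (hkm : k ≤ m) (hm : m ≤ l.length) :
    ((resetReg k l).take m).countP p + (if p (regVal k l) then 1 else 0) =
      (l.take m).countP p + (if p 1 then 1 else 0) := by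
  have hval : regVal k (l.take m) = regVal k l := by
    simp [regVal, List.getD_eq_getElem?_getD, show k - 1 < m by omega]
  rw [take_resetReg l hk hkm, ← hval]
  exact countP_resetReg p hk (by rw [List.length_take]; omega)

theorem getD_resetReg_of_le {k i : ℕ} (l : List ℕ) (hk : 1 ≤ k) (hki : k ≤ i) :
    (resetReg k l).getD i 0 = l.getD i 0 := by
  obtain ⟨i, rfl⟩ : ∃ i', i = i' + 1 := ⟨i - 1, by omega⟩
  simp [resetReg, List.getD_eq_getElem?_getD,
    List.getElem?_eraseIdx_of_ge (show k - 1 ≤ i by omega)]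

theorem getD_update {p i : ℕ} {l : List ℕ} (hl : l.Pairwise (· ≤ ·)) (hi : i < l.length) :
    (update p l).getD i 0 = max p (l.getD i 0) := by
  rw [update_eq_map_max hl, List.getD_eq_getElem _ _ (by simpa using hi),
    List.getD_eq_getElem _ _ hi, List.getElem_map]

theorem countP_take_update {p P : ℕ} (m : ℕ) {l : List ℕ} (hl : l.Pairwise (· ≤ ·)) (hpP : p ≤ P) :
    ((update p l).take m).countP (P < ·) = (l.take m).countP (P < ·) := by
  rw [update_eq_map_max hl, ← List.map_take, List.countP_map]
  exact List.countP_congr fun x _ => by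
    simp only [Function.comp_apply, decide_eq_true_eq, lt_max_iff]
    omega

theorem getD_bumpKeep (c0 k i : ℕ) (c : List ℕ) :
    (bumpKeep c0 k c).getD i 0 = if i < k then c0 else c.getD i 0 := by
  simp only [bumpKeep, List.getD_eq_getElem?_getD, List.getElem?_append, List.getElem?_replicate,
    List.length_replicate, List.getElem?_drop]
  split_ifs
  · rfl
  · rw [Nat.add_sub_cancel' (by omega)]

theorem getD_bumpDec (c0 k i : ℕ) (c : List ℕ) :
    (bumpDec c0 k c).getD i 0 =
      if i < k then c0 else if i = k then c.getD k 0 - 1 else c.getD i 0 := by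
  simp only [bumpDec, List.getD_eq_getElem?_getD, List.getElem?_append, List.getElem?_replicate,
    List.length_replicate]
  split_ifs with h₁ h₂
  · rfl
  · simp [h₂]
  · obtain ⟨j, hj⟩ : ∃ j, i - k = j + 1 := ⟨i - k - 1, by omega⟩
    simp only [hj, List.getElem?_cons_succ, List.getElem?_drop]
    congr 3
    omega

end Lists

theorem InAlph.one_le_prio {n d : ℕ} {e : Letter} (he : InAlph n d e) : 1 ≤ prio e := he.2.2.1

theorem InAlph.prio_le {n d : ℕ} {e : Letter} (he : InAlph n d e) : prio e ≤ d := he.2.2.2.1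

-- Registers are listed bottom first, so the paper's non-increasing tuples are sorted upwards.
def IsRegState (n : ℕ) (s : List ℕ) : Prop :=
  s.length = rn n ∧ s.Pairwise (· ≤ ·) ∧ ∀ x ∈ s, 1 ≤ x

theorem isRegState_init (n d : ℕ) : IsRegState n (Raut n d).init :=
  ⟨List.length_replicate, List.pairwise_replicate.2 (Or.inr le_rfl),
    fun _ hx => (List.eq_of_mem_replicate hx).ge⟩

theorem isRegState_update {n p : ℕ} {s : List ℕ} (hs : IsRegState n s) (hp : 1 ≤ p) :
    IsRegState n (update p s) := by
  obtain ⟨hlen, hsort, hpos⟩ := hs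
  rw [update_eq_map_max hsort]
  refine ⟨by simp [hlen], hsort.map _ fun a b hab => max_le_max le_rfl hab, ?_⟩
  simp only [List.mem_map]
  rintro _ ⟨x, -, rfl⟩
  exact le_max_of_le_left hp

theorem isRegState_resetReg {n k : ℕ} {s : List ℕ} (hs : IsRegState n s) (hk : 1 ≤ k)
    (hkn : k ≤ rn n) : IsRegState n (resetReg k s) := by
  obtain ⟨hlen, hsort, hpos⟩ := hs
  have hsub := List.eraseIdx_sublist s (k - 1)
  refine ⟨?_, List.pairwise_cons.2 ⟨fun x hx => hpos x (hsub.mem hx), hsort.sublist hsub⟩, ?_⟩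
  · simp only [resetReg, List.length_cons, List.length_eraseIdx, hlen]
    split_ifs <;> omega
  · simp only [resetReg, List.mem_cons]
    rintro x (rfl | hx)
    exacts [le_rfl, hpos x (hsub.mem hx)]

theorem Raut.trans_cases {n d r : ℕ} {s s' : List ℕ} {e : Letter}
    (h : (s, e, r, s') ∈ (Raut n d).trans) :
    InAlph n d e ∧ ((r = 1 ∧ s' = update (prio e) s) ∨
      (2 ≤ r ∧ r / 2 ≤ rn n ∧ (Even r ↔ Even (regVal (r / 2) (update (prio e) s))) ∧
        s' = resetReg (r / 2) (update (prio e) s))) := by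
  obtain ⟨s, e, he, h⟩ := h
  simp only [Prod.mk.injEq] at h
  rcases h with ⟨rfl, rfl, rfl, rfl⟩ |
    ⟨k, hk, hkn, ⟨hev, rfl, rfl, rfl, rfl⟩ | ⟨hodd, rfl, rfl, rfl, rfl⟩⟩
  · exact ⟨he, Or.inl ⟨rfl, rfl⟩⟩
  · have hk2 : 2 * k / 2 = k := by omega
    refine ⟨he, Or.inr ⟨by omega, by omega, ?_, ?_⟩⟩ <;> simp [hk2, hev]
  · have hk2 : (2 * k + 1) / 2 = k := by omega
    refine ⟨he, Or.inr ⟨by omega, by omega, ?_, ?_⟩⟩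
    · simp [hk2, Nat.not_even_iff_odd.2 hodd]
    · simp [hk2]

section RautTrans

variable {n d r : ℕ} {s s' : List ℕ} {e : Letter}

theorem Raut.isRegState_tgt (h : (s, e, r, s') ∈ (Raut n d).trans) (hs : IsRegState n s) :
    IsRegState n s' := by
  obtain ⟨he, ⟨-, rfl⟩ | ⟨hr, hrn, -, rfl⟩⟩ := Raut.trans_cases h
  · exact isRegState_update hs he.one_le_prio
  · exact isRegState_resetReg (isRegState_update hs he.one_le_prio) (by omega) hrn

theorem Raut.getD_tgt (h : (s, e, r, s') ∈ (Raut n d).trans) (hs : IsRegState n s) {i : ℕ}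
    (hri : r / 2 ≤ i) (hi : i < rn n) : s'.getD i 0 = max (prio e) (s.getD i 0) := by
  have hu := getD_update (p := prio e) hs.2.1 (hs.1 ▸ hi)
  obtain ⟨-, ⟨-, rfl⟩ | ⟨hr, -, -, rfl⟩⟩ := Raut.trans_cases h
  · exact hu
  · rw [getD_resetReg_of_le _ (by omega) (by omega), hu]

theorem Raut.countP_take_tgt_le {P m : ℕ} (h : (s, e, r, s') ∈ (Raut n d).trans)
    (hs : IsRegState n s) (hP : 1 ≤ P) (heP : prio e ≤ P) (hrm : r / 2 ≤ m) (hm : m ≤ rn n) :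
    (s'.take m).countP (P < ·) ≤ (s.take m).countP (P < ·) := by
  rw [← countP_take_update m hs.2.1 heP]
  obtain ⟨he, ⟨-, rfl⟩ | ⟨hr, -, -, rfl⟩⟩ := Raut.trans_cases h
  · exact le_rfl
  · have := countP_take_resetReg_add (P < ·) (l := update (prio e) s) (by omega) hrm
      (by rw [(isRegState_update hs he.one_le_prio).1]; exact hm)
    simp only [decide_eq_true_eq, show ¬ P < 1 by omega, if_false] at this
    omega

theorem Raut.countP_take_tgt_lt {P m : ℕ} (h : (s, e, r, s') ∈ (Raut n d).trans)
    (hs : IsRegState n s) (hP : Odd P) (heP : prio e ≤ P) (hr : r = 2 * m) (hm : m ≤ rn n)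
    (hval : P ≤ max (prio e) (s.getD (m - 1) 0)) :
    (s'.take m).countP (P < ·) < (s.take m).countP (P < ·) := by
  rw [← countP_take_update m hs.2.1 heP]
  obtain ⟨he, ⟨hr1, -⟩ | ⟨hr2, -, hpar, rfl⟩⟩ := Raut.trans_cases h
  · omega
  rw [show r / 2 = m by omega] at hpar ⊢
  have := countP_take_resetReg_add (P < ·) (k := m) (l := update (prio e) s) (by omega) le_rfl
    (by rw [(isRegState_update hs he.one_le_prio).1]; exact hm)
  have hv : regVal m (update (prio e) s) = max (prio e) (s.getD (m - 1) 0) :=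
    getD_update hs.2.1 (by rw [hs.1]; omega)
  have hv_even : Even (max (prio e) (s.getD (m - 1) 0)) := hv ▸ hpar.1 (hr ▸ even_two_mul m)
  have hPv : P < regVal m (update (prio e) s) :=
    hv ▸ hval.lt_of_ne fun hPeq => Nat.not_even_iff_odd.2 hP (hPeq ▸ hv_even)
  have hP1 : ¬ P < 1 := by have := hP.pos; omega
  simp only [decide_eq_true_eq, hP1, hPv, if_true, if_false] at this
  omega

theorem Raut.countP_even_tgt_add (h : (s, e, r, s') ∈ (Raut n d).trans) (hs : IsRegState n s)
    (he : prio e = 1) :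
    s'.countP (Even ·) + (if Even r then 1 else 0) = s.countP (Even ·) := by
  obtain ⟨-, ⟨rfl, rfl⟩ | ⟨hr, hrn, hpar, rfl⟩⟩ := Raut.trans_cases h
  · simp [he, update_one hs.2.2]
  · rw [he, update_one hs.2.2] at hpar ⊢
    have := countP_resetReg (Even ·) (l := s) (k := r / 2) (by omega) (by rw [hs.1]; exact hrn)
    simpa [hpar] using this

end RautTrans

theorem Saut.trans_of_src_none {n d : ℕ} {t : Trans SState} (h : t ∈ (Saut n d).trans)
    (ht : tSrc t = none) : tPrio t = 1 ∧ tTgt t = none := by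
  obtain ⟨_, e, p, q⟩ := t
  subst ht
  simp only [Saut, Set.mem_ofPred_eq, Prod.mk.injEq, reduceCtorEq, false_and, and_false,
    exists_false, or_false] at h
  obtain ⟨_, _, _, _, hp, hq⟩ := h
  exact ⟨hp, hq⟩

theorem Saut.exists_raut_trans {n d p : ℕ} {e : Letter} {s s' c c' : List ℕ}
    (h : (some (s, c), e, p, some (s', c')) ∈ (Saut n d).trans) :
    ∃ r, (s, e, r, s') ∈ (Raut n d).trans ∧ (Odd r → 1 < c.getD (r / 2) 0) ∧
      c' = if Even r then bumpKeep n (r / 2) c else bumpDec n (r / 2) c := by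
  simp only [Saut, Set.mem_ofPred_eq, Prod.mk.injEq, reduceCtorEq, and_false, exists_false,
    or_false, Option.some.injEq, false_or] at h
  rcases h with ⟨s, c, e, k, s', -, hR, ⟨rfl, rfl⟩, rfl, -, rfl, rfl⟩ |
    ⟨s, c, e, k, s', hR, hc, ⟨rfl, rfl⟩, rfl, -, rfl, rfl⟩
  · refine ⟨2 * k, hR, fun h => absurd (even_two_mul k) (Nat.not_even_iff_odd.2 h), ?_⟩
    simp [show 2 * k / 2 = k by omega]
  · refine ⟨2 * k + 1, hR, fun _ => by rwa [show (2 * k + 1) / 2 = k by omega], ?_⟩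
    simp [show (2 * k + 1) / 2 = k by omega]

section Counters

open Finset

variable {n R j : ℕ} {c : List ℕ}

def ctrValue (n R : ℕ) (c : List ℕ) : ℕ := ∑ i ∈ range R, (c.getD i 0 - 1) * n ^ i

theorem sum_range_sub_one_mul_pow (hn : 1 ≤ n) (j : ℕ) :
    ∑ i ∈ range j, (n - 1) * n ^ i + 1 = n ^ j := by
  obtain ⟨m, rfl⟩ : ∃ m, n = m + 1 := ⟨n - 1, by omega⟩
  simpa [mul_sum, mul_comm] using geom_sum_mul_add m j

theorem ctrValue_bumpKeep_lt (hn : 1 ≤ n) (hj : j ≤ R) :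
    ctrValue n R (bumpKeep n j c) < n ^ j + ctrValue n R c := by
  rw [ctrValue, ctrValue, ← sum_range_add_sum_Ico _ hj, ← sum_range_add_sum_Ico _ hj]
  have hlow : ∑ i ∈ range j, ((bumpKeep n j c).getD i 0 - 1) * n ^ i =
      ∑ i ∈ range j, (n - 1) * n ^ i :=
    sum_congr rfl fun i hi => by rw [getD_bumpKeep, if_pos (mem_range.1 hi)]
  have hhigh : ∑ i ∈ Ico j R, ((bumpKeep n j c).getD i 0 - 1) * n ^ i =
      ∑ i ∈ Ico j R, (c.getD i 0 - 1) * n ^ i :=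
    sum_congr rfl fun i hi => by rw [getD_bumpKeep, if_neg (not_lt.2 (mem_Ico.1 hi).1)]
  have := sum_range_sub_one_mul_pow hn j
  omega

theorem ctrValue_bumpDec_lt (hn : 1 ≤ n) (hj : j < R) (hc : 1 < c.getD j 0) :
    ctrValue n R (bumpDec n j c) < ctrValue n R c := by
  have hj' : j + 1 ≤ R := hj
  rw [ctrValue, ctrValue, ← sum_range_add_sum_Ico _ hj', ← sum_range_add_sum_Ico _ hj',
    sum_range_succ, sum_range_succ]
  have hlow : ∑ i ∈ range j, ((bumpDec n j c).getD i 0 - 1) * n ^ i =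
      ∑ i ∈ range j, (n - 1) * n ^ i :=
    sum_congr rfl fun i hi => by rw [getD_bumpDec, if_pos (mem_range.1 hi)]
  have hhigh : ∑ i ∈ Ico (j + 1) R, ((bumpDec n j c).getD i 0 - 1) * n ^ i =
      ∑ i ∈ Ico (j + 1) R, (c.getD i 0 - 1) * n ^ i :=
    sum_congr rfl fun i hi => by
      have := (mem_Ico.1 hi).1
      rw [getD_bumpDec, if_neg (by omega), if_neg (by omega)]
  have hmid : ((bumpDec n j c).getD j 0 - 1) * n ^ j + n ^ j = (c.getD j 0 - 1) * n ^ j := by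
    rw [getD_bumpDec, if_neg (lt_irrefl j), if_pos rfl, ← Nat.succ_mul]
    congr 1
    omega
  have := sum_range_sub_one_mul_pow hn j
  omega

theorem ctrValue_lt (hn : 1 ≤ n) (hc : ∀ i, c.getD i 0 ≤ n) : ctrValue n R c < n ^ R := by
  have := sum_range_sub_one_mul_pow hn R
  have : ctrValue n R c ≤ ∑ i ∈ range R, (n - 1) * n ^ i :=
    sum_le_sum fun i _ => Nat.mul_le_mul_right _ (by have := hc i; omega)
  omega

end Counters

/-- An accepting run of `S_{n,d}` on `w`: it never visits `rej`, so it is the run of `R_{n,d}` given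
by `regs` and `rprio`, together with the counters `ctrs`. -/
structure SautRun (n d : ℕ) (w : Word) where
  regs : ℕ → List ℕ
  ctrs : ℕ → List ℕ
  rprio : ℕ → ℕ
  regs_zero : regs 0 = (Raut n d).init
  ctrs_zero : ctrs 0 = List.replicate (rn n + 1) n
  mem_trans : ∀ k, (regs k, w k, rprio k, regs (k + 1)) ∈ (Raut n d).trans
  one_lt_ctr : ∀ k, Odd (rprio k) → 1 < (ctrs k).getD (rprio k / 2) 0
  ctrs_succ : ∀ k, ctrs (k + 1) =
    if Even (rprio k) then bumpKeep n (rprio k / 2) (ctrs k) else bumpDec n (rprio k / 2) (ctrs k)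

theorem Saut.src_ne_none {n d : ℕ} {ρ : ℕ → Trans SState} (hrun : IsRun (Saut n d) ρ)
    (hacc : Accepting ρ) (k : ℕ) : tSrc (ρ k) ≠ none := by
  intro hk
  have hnone : ∀ i, k ≤ i → tSrc (ρ i) = none := by
    intro i hki
    induction i, hki using Nat.le_induction with
    | base => exact hk
    | succ i _ ih => exact (hrun.2 i).2 ▸ (Saut.trans_of_src_none (hrun.2 i).1 ih).2
  obtain ⟨p, hp, hpinf, -⟩ := hacc
  obtain ⟨i, hki, rfl⟩ := hpinf k
  exact Nat.not_even_one ((Saut.trans_of_src_none (hrun.2 i).1 (hnone i hki)).1 ▸ hp)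

theorem exists_sautRun {n d : ℕ} {w : Word} (hw : w ∈ Lang (Saut n d)) :
    Nonempty (SautRun n d w) := by
  obtain ⟨ρ, hrun, hread, hacc⟩ := hw
  have hsome : ∀ k, ∃ x, tSrc (ρ k) = some x :=
    fun k => Option.ne_none_iff_exists'.1 (Saut.src_ne_none hrun hacc k)
  choose x hx using hsome
  have hstep : ∀ k, ∃ r, ((x k).1, w k, r, (x (k + 1)).1) ∈ (Raut n d).trans ∧
      (Odd r → 1 < (x k).2.getD (r / 2) 0) ∧
      (x (k + 1)).2 = if Even r then bumpKeep n (r / 2) (x k).2 else bumpDec n (r / 2) (x k).2 := by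
    intro k
    have hρ : ρ k = (some ((x k).1, (x k).2), w k, tPrio (ρ k),
        some ((x (k + 1)).1, (x (k + 1)).2)) :=
      Prod.ext (hx k) (Prod.ext (hread k) (Prod.ext rfl ((hrun.2 k).2.trans (hx (k + 1)))))
    exact Saut.exists_raut_trans (hρ ▸ (hrun.2 k).1)
  choose r hr hctr hsucc using hstep
  have h0 : x 0 = ((Raut n d).init, List.replicate (rn n + 1) n) :=
    Option.some.inj ((hx 0).symm.trans hrun.1)
  exact ⟨⟨fun k => (x k).1, fun k => (x k).2, r, by rw [h0], by rw [h0], hr, hctr, hsucc⟩⟩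

namespace SautRun

variable {n d : ℕ} {w : Word}

theorem isRegState (ρ : SautRun n d w) (k : ℕ) : IsRegState n (ρ.regs k) := by
  induction k with
  | zero => exact ρ.regs_zero ▸ isRegState_init n d
  | succ k ih => exact Raut.isRegState_tgt (ρ.mem_trans k) ih

theorem one_le_rprio (ρ : SautRun n d w) (k : ℕ) : 1 ≤ ρ.rprio k := by
  obtain ⟨-, ⟨h, -⟩ | ⟨h, -⟩⟩ := Raut.trans_cases (ρ.mem_trans k) <;> omega

theorem rprio_le (ρ : SautRun n d w) (k : ℕ) : ρ.rprio k ≤ 2 * rn n + 1 := by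
  obtain ⟨-, ⟨h, -⟩ | ⟨-, h, -⟩⟩ := Raut.trans_cases (ρ.mem_trans k) <;> omega

theorem getD_ctrs_succ (ρ : SautRun n d w) {k u : ℕ} (hu : ρ.rprio k ≤ 2 * u + 1) :
    (ρ.ctrs (k + 1)).getD u 0 =
      if ρ.rprio k = 2 * u + 1 then (ρ.ctrs k).getD u 0 - 1 else (ρ.ctrs k).getD u 0 := by
  rw [ρ.ctrs_succ]
  split_ifs with hev hu' hu' <;> simp only [getD_bumpKeep, getD_bumpDec]
  · exact absurd hev (by rw [hu', Nat.even_add_one]; simp)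
  · rw [if_neg (by omega)]
  · rw [if_neg (by omega), if_pos (by omega), hu', show (2 * u + 1) / 2 = u by omega]
  · rw [Nat.not_even_iff_odd] at hev
    obtain ⟨j, hj⟩ := hev
    rw [if_neg (by omega), if_neg (by omega)]

theorem maxInfOftEven_rprio (ρ : SautRun n d w) : MaxInfOftEven ρ.rprio := by
  obtain ⟨p, hp, hmax⟩ := exists_maxInfOft ρ.rprio_le
  refine ⟨p, ?_, hp, hmax⟩
  obtain hev | ⟨u, rfl⟩ := Nat.even_or_odd p
  · exact hev
  refine absurd ?_
    (not_frequently_succ_lt_of_eventually_succ_le (f := fun k => (ρ.ctrs k).getD u 0) ?_)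
  · refine (infOft_iff_frequently.1 hp).mono fun k hk => ?_
    have := ρ.one_lt_ctr k (hk ▸ odd_two_mul_add_one u)
    simp only [ρ.getD_ctrs_succ hk.le, if_pos hk]
    rw [hk, show (2 * u + 1) / 2 = u by omega] at this
    omega
  · filter_upwards [eventually_le_of_forall_infOft_le ρ.rprio_le hmax] with k hk
    simp only [ρ.getD_ctrs_succ hk]
    split_ifs <;> omega

theorem limsupEven (ρ : SautRun n d w) : LimsupEven w := by
  obtain ⟨p, ⟨m, rfl⟩, hp, hpmax⟩ := ρ.maxInfOftEven_rprio
  have hprio : ∀ k, prio (w k) ≤ d := fun k => (Raut.trans_cases (ρ.mem_trans k)).1.prio_le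
  obtain ⟨P, hP, hPmax⟩ := exists_maxInfOft hprio
  refine ⟨P, ?_, hP, hPmax⟩
  by_contra hPev
  have hPodd := Nat.not_even_iff_odd.1 hPev
  obtain ⟨k₀, -, hk₀⟩ := hp 0
  have hm : 1 ≤ m := by have := ρ.one_le_rprio k₀; omega
  have hmn : m ≤ rn n := by have := ρ.rprio_le k₀; omega
  have hr := eventually_le_of_forall_infOft_le ρ.rprio_le hpmax
  have hw := eventually_le_of_forall_infOft_le hprio hPmax
  refine not_frequently_succ_lt_of_eventually_succ_le
    (f := fun k => ((ρ.regs k).take m).countP (P < ·)) ?_ ?_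
  · filter_upwards [hr, hw] with k hrk hwk
    exact Raut.countP_take_tgt_le (ρ.mem_trans k) (ρ.isRegState k) hPodd.pos hwk (by omega) hmn
  · -- register `m` holds at least `P` from an occurrence of `P` until the next reset of `m`
    let Q k := P ≤ max (prio (w k)) ((ρ.regs k).getD (m - 1) 0)
    have hQ : ∃ᶠ k in atTop, Q k :=
      (infOft_iff_frequently.1 hP).mono fun k hk => hk.symm.le.trans (le_max_left _ _)
    have hstep : ∀ᶠ k in atTop, Q k → ρ.rprio k ≠ m + m → Q (k + 1) := by
      filter_upwards [hr] with k hrk hQk hne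
      simp only [Q, Raut.getD_tgt (ρ.mem_trans k) (ρ.isRegState k) (i := m - 1) (by omega)
        (by omega)]
      exact le_max_of_le_right hQk
    refine ((frequently_and_of_propagate hQ hstep (infOft_iff_frequently.1 hp)).and_eventually
      hw).mono fun k ⟨⟨hQk, hrk⟩, hwk⟩ => ?_
    exact Raut.countP_take_tgt_lt (ρ.mem_trans k) (ρ.isRegState k) hPodd hwk (by omega) hmn hQk

theorem getD_ctrs_le (ρ : SautRun n d w) (k i : ℕ) : (ρ.ctrs k).getD i 0 ≤ n := by
  induction k generalizing i with
  | zero =>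
    rw [ρ.ctrs_zero, List.getD_eq_getElem?_getD, List.getElem?_replicate]
    split_ifs <;> simp
  | succ k ih =>
    have := ih i
    have := ih (ρ.rprio k / 2)
    rw [ρ.ctrs_succ]
    split_ifs <;> simp only [getD_bumpKeep, getD_bumpDec] <;> split_ifs <;> omega

def potential (ρ : SautRun n d w) (k : ℕ) : ℕ :=
  n ^ (rn n + 1) * (ρ.regs k).countP (Even ·) + ctrValue n (rn n + 1) (ρ.ctrs k)

theorem potential_lt (ρ : SautRun n d w) (hn : 1 ≤ n) (k : ℕ) :
    ρ.potential k < n ^ (rn n + 1) * (rn n + 1) := by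
  have hE : (ρ.regs k).countP (Even ·) ≤ rn n := (ρ.isRegState k).1 ▸ List.countP_le_length
  have hV := ctrValue_lt (R := rn n + 1) hn (ρ.getD_ctrs_le k)
  have := Nat.mul_le_mul_left (n ^ (rn n + 1)) hE
  rw [potential, mul_add_one]
  omega

/- On a letter of priority `1` an even reset of register `j` removes an even register and raises
the counter value by less than `n ^ j`; any other transition decrements the counter value. -/
theorem potential_succ_lt (ρ : SautRun n d w) (hn : 1 ≤ n) {k : ℕ} (hk : prio (w k) = 1) :
    ρ.potential (k + 1) < ρ.potential k := by
  have hE := Raut.countP_even_tgt_add (ρ.mem_trans k) (ρ.isRegState k) hk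
  have hj : ρ.rprio k / 2 < rn n + 1 := by have := ρ.rprio_le k; omega
  rw [potential, potential, ρ.ctrs_succ k]
  split_ifs at hE ⊢ with hev
  · have hV := ctrValue_bumpKeep_lt (c := ρ.ctrs k) hn hj.le
    have hA := Nat.pow_le_pow_right hn hj.le
    rw [← hE, mul_add_one]
    omega
  · have hV := ctrValue_bumpDec_lt hn hj (ρ.one_lt_ctr k (Nat.not_even_iff_odd.1 hev))
    rw [← hE, add_zero]
    omega

end SautRun

theorem notMem_lang_Saut_of_long_blocks {n d : ℕ} {w : Word} (hn : 1 ≤ n)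
    (hw : ∀ L, ∃ t, ∀ k, t ≤ k → k < t + L → prio (w k) = 1) : w ∉ Lang (Saut n d) := by
  intro hmem
  obtain ⟨ρ⟩ := exists_sautRun hmem
  obtain ⟨t, ht⟩ := hw (n ^ (rn n + 1) * (rn n + 1))
  have := add_le_of_forall_succ_lt fun k hk hkt => ρ.potential_succ_lt hn (ht k hk hkt)
  have := ρ.potential_lt hn t
  omega

def squareWord : Word := fun k => (1, if IsSquare k then 2 else 1, 1)

theorem prio_squareWord (k : ℕ) : prio (squareWord k) = if IsSquare k then 2 else 1 := rfl

theorem inAlph_squareWord {n d : ℕ} (hn : 1 ≤ n) (hd : 2 ≤ d) (k : ℕ) :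
    InAlph n d (squareWord k) := by
  refine ⟨le_rfl, hn, ?_, ?_, le_rfl, hn⟩ <;>
    simp only [squareWord] <;> split_ifs <;> omega

theorem limsupEven_squareWord : LimsupEven squareWord := by
  refine ⟨2, even_two, fun N => ⟨N * N, Nat.le_mul_self N, ?_⟩, fun q hq => ?_⟩
  · simp [prio_squareWord]
  · obtain ⟨k, -, rfl⟩ := hq 0
    simp only [prio_squareWord]
    split_ifs <;> omega

theorem prio_squareWord_eq_one {a k : ℕ} (h₁ : a * a < k) (h₂ : k < (a + 1) * (a + 1)) :
    prio (squareWord k) = 1 := by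
  rw [prio_squareWord, if_neg]
  rintro ⟨b, rfl⟩
  have := Nat.mul_self_lt_mul_self_iff.1 h₁
  have := Nat.mul_self_lt_mul_self_iff.1 h₂
  omega

theorem Saut_lang_ssubset_general (n d : ℕ) (hn : 1 ≤ n) (hd : 2 ≤ d) :
    (∀ w ∈ Lang (Saut n d), LimsupEven w) ∧
    ∃ w : Word, (∀ k, InAlph n d (w k)) ∧ LimsupEven w ∧ w ∉ Lang (Saut n d) := by
  refine ⟨fun w hw => (exists_sautRun hw).some.limsupEven,
    squareWord, inAlph_squareWord hn hd, limsupEven_squareWord, ?_⟩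
  refine notMem_lang_Saut_of_long_blocks hn fun L => ⟨L * L + 1, fun k hk hkL => ?_⟩
  exact prio_squareWord_eq_one (a := L) (by omega) (by nlinarith)

/-- For even `d ≥ 2`, `L(S_{n,d})` is a proper subset of
`LimsupEven_{n,d}`. -/
theorem Saut_lang_ssubset (n d : ℕ) (hn : 1 ≤ n) (hde : Even d) (hd : 2 ≤ d) :
    (∀ w ∈ Lang (Saut n d), LimsupEven w) ∧
    ∃ w : Word, (∀ k, InAlph n d (w k)) ∧ LimsupEven w ∧ w ∉ Lang (Saut n d) :=
  Saut_lang_ssubset_general n d hn hd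

end PGSep
end

section
/- Let n and d be positive integers, let G be a game graph with n nodes and priorities up to d, and let A be a PG separator with input alphabet Σ_{n,d}. If Odd has a positional winning strategy in G, then Odd has a winning strategy in the synchronized product G×A; in particular, Even has no winning strategy in G×A. -/
namespace PGSep

/-! ### Auxiliary material for Statement 8 -/

/-- The endpoint of a finite path, computed from the list of edges. -/
def epl {V : Type*} (s : V) (l : List (V × ℕ × V)) : V :=
  l.foldl (fun _ e => e.2.2) s

/-- Extract the label of a `Sum.inl` node (junk value on `Sum.inr`). -/
def getInl : ℕ ⊕ Letter → ℕ
  | Sum.inl u => u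
  | Sum.inr _ => 0

lemma epl_snoc {V : Type*} (s : V) (l : List (V × ℕ × V)) (e : V × ℕ × V) :
    epl s (l ++ [e]) = e.2.2 := by
  simp [epl, List.foldl_append]

lemma isFinPath_end {V : Type*} {E : Set (V × ℕ × V)} :
    ∀ {l : List (V × ℕ × V)} {u v : V}, IsFinPath E u l v → v = epl u l := by
  intro l
  induction l with
  | nil => intro u v h; exact h.symm
  | cons e l ih => intro u v h; exact ih h.2.2

lemma isFinPath_snoc {V : Type*} {E : Set (V × ℕ × V)} :
    ∀ {l : List (V × ℕ × V)} {u v : V} (e : V × ℕ × V),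
      IsFinPath E u l v → e ∈ E → e.1 = v → IsFinPath E u (l ++ [e]) e.2.2 := by
  intro l
  induction l with
  | nil => intro u v e h heE he1; exact ⟨heE, he1.trans h.symm, rfl⟩
  | cons a l ih => intro u v e h heE he1; exact ⟨h.1, h.2.1, ih e h.2.2 heE he1⟩

open Classical in
/-- Follow Even's strategy on Even's nodes and Odd's strategy on Odd's nodes. -/
noncomputable def stepFn {V : Type*} (g : PGame V)
    (sE sO : List (V × ℕ × V) → V × ℕ × V) (l : List (V × ℕ × V)) : V × ℕ × V :=
  if g.evenOwn (epl g.start l) then sE l else sO l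

/-- The history of the play following both strategies. -/
noncomputable def histFn {V : Type*} (g : PGame V)
    (sE sO : List (V × ℕ × V) → V × ℕ × V) : ℕ → List (V × ℕ × V)
  | 0 => []
  | k + 1 => histFn g sE sO k ++ [stepFn g sE sO (histFn g sE sO k)]

/-- If Odd has a winning strategy in a game, Even has none. -/
lemma oddWins_not_evenWins {V : Type*} {g : PGame V} (hO : OddWins g) : ¬ EvenWins g := by
  classical
  rintro ⟨sE, hEv, hEw⟩
  obtain ⟨sO, hOv, hOw⟩ := hO
  set play : ℕ → V × ℕ × V := fun k => stepFn g sE sO (histFn g sE sO k) with hplay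
  have histsucc : ∀ k, histFn g sE sO (k + 1) = histFn g sE sO k ++ [play k] := fun k => rfl
  have stepOk : ∀ l, IsFinPath g.edges g.start l (epl g.start l) →
      stepFn g sE sO l ∈ g.edges ∧ (stepFn g sE sO l).1 = epl g.start l := by
    intro l hp
    by_cases h : g.evenOwn (epl g.start l)
    · have := hEv l _ hp h
      simpa [stepFn, if_pos h] using this
    · have := hOv l _ hp h
      simpa [stepFn, if_neg h] using this
  have key : ∀ k, IsFinPath g.edges g.start (histFn g sE sO k)
      (epl g.start (histFn g sE sO k)) := by
    intro k
    induction k with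
    | zero => exact rfl
    | succ k ih =>
      have h2 := stepOk _ ih
      rw [histsucc k, epl_snoc]
      exact isFinPath_snoc _ ih h2.1 h2.2
  have hplayOk : ∀ k, play k ∈ g.edges ∧ (play k).1 = epl g.start (histFn g sE sO k) :=
    fun k => stepOk _ (key k)
  have epsucc : ∀ k, epl g.start (histFn g sE sO (k + 1)) = (play k).2.2 := by
    intro k; rw [histsucc k, epl_snoc]
  have hmap : ∀ k, (List.range k).map play = histFn g sE sO k := by
    intro k
    induction k with
    | zero => rfl
    | succ k ih => rw [List.range_succ, List.map_append, ih]; rfl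
  have hIsPlay : g.IsPlay play := by
    refine ⟨(hplayOk 0).2, fun k => ⟨(hplayOk k).1, ?_⟩⟩
    rw [(hplayOk (k + 1)).2, epsucc k]
  have hconsE : ∀ k, g.evenOwn ((play k).1) → play k = sE ((List.range k).map play) := by
    intro k h
    rw [hmap k]
    rw [(hplayOk k).2] at h
    show stepFn g sE sO _ = _
    simp only [stepFn, if_pos h]
  have hconsO : ∀ k, ¬ g.evenOwn ((play k).1) → play k = sO ((List.range k).map play) := by
    intro k h
    rw [hmap k]
    rw [(hplayOk k).2] at h
    show stepFn g sE sO _ = _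
    simp only [stepFn, if_neg h]
  exact hOw play hIsPlay hconsO (hEw play hIsPlay hconsE)

lemma prod_finpath_inl {n d : ℕ} {Q : Type*} (G : GameGraph n d) (A : Automaton Q) :
    ∀ (l : List (((ℕ ⊕ Letter) × Q) × ℕ × ((ℕ ⊕ Letter) × Q)))
      (x v : (ℕ ⊕ Letter) × Q),
      IsFinPath (prodGame G A).edges x l v →
      (∀ u : ℕ, x.1 = Sum.inl u → u ∈ Set.Icc 1 n) →
      ∀ u : ℕ, v.1 = Sum.inl u → u ∈ Set.Icc 1 n := by
  intro l
  induction l with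
  | nil => intro x v h hx; exact h ▸ hx
  | cons e l ih =>
    intro x v h hx
    obtain ⟨heE, he1, hrest⟩ := h
    refine ih e.2.2 v hrest ?_
    intro u hu
    simp only [prodGame, Set.mem_setOf_eq] at heE
    rcases heE with ⟨e', he'G, s, hed⟩ | ⟨t, htA, htG, hed⟩
    · rw [hed] at hu; simp at hu
    · rw [hed] at hu
      simp only [Sum.inl.injEq] at hu
      have h' := G.edges_alph _ htG
      rw [← hu]
      exact Set.mem_Icc.mpr ⟨h'.2.2.2.2.1, h'.2.2.2.2.2⟩

/-- If `A` is a PG separator and Odd has a positional winning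
strategy in `G`, then Odd has a winning strategy in `G × A`; in particular, Even
has no winning strategy in `G × A`. -/
theorem separator_odd_wins_product (n d : ℕ) (hn : 1 ≤ n) (hd : 1 ≤ d)
    (G : GameGraph n d) {Q : Type} [Finite Q] (A : Automaton Q) (d' : ℕ)
    (hA : IsParityAutomaton n d d' A) (hSep : PGSeparator n d A)
    (τ : OPosStrat G) (hτ : OWinningPos τ) :
    OddWins (prodGame G A) ∧ ¬ EvenWins (prodGame G A) := by
  classical
  have hOdd : OddWins (prodGame G A) := by
    refine ⟨fun l => (epl (prodGame G A).start l, 1,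
      (Sum.inr (τ.choice (getInl (epl (prodGame G A).start l).1)),
        (epl (prodGame G A).start l).2)), ?_, ?_⟩
    · -- validity of Odd's strategy
      rintro l ⟨v1, v2⟩ hpath hnot
      have hv : (v1, v2) = epl (prodGame G A).start l := isFinPath_end hpath
      cases v1 with
      | inr e => exact absurd trivial hnot
      | inl u =>
        have hu : u ∈ Set.Icc 1 n := by
          refine prod_finpath_inl G A l _ _ hpath ?_ u rfl
          intro w hw
          have hw' : G.start = w := by simpa [prodGame] using hw
          rw [← hw']; exact G.start_mem
        have hodd : u ∈ G.oddN := by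
          rw [← G.union_eq] at hu
          rcases hu with h | h
          · exact absurd h hnot
          · exact h
        obtain ⟨hcE, hc1⟩ := τ.mem u hodd
        beta_reduce
        rw [← hv]
        refine ⟨Or.inl ⟨τ.choice u, hcE, v2, ?_⟩, rfl⟩
        simp [getInl, hc1]
    · -- every consistent play is lost by Even
      intro wt hplayP hcons hmax
      obtain ⟨hstart, hpath⟩ := hplayP
      have step2 : ∀ (j : ℕ) (uu : ℕ) (ss : Q), (wt j).1 = (Sum.inl uu, ss) →
          ∃ ee tt, ee ∈ G.edges ∧ ee.1 = uu ∧ tt ∈ A.trans ∧ tLetter tt = ee ∧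
            tSrc tt = ss ∧
            wt j = ((Sum.inl uu, ss), 1, (Sum.inr ee, ss)) ∧
            wt (j + 1) = ((Sum.inr ee, ss), tPrio tt, (Sum.inl ee.2.2, tTgt tt)) ∧
            (wt (j + 2)).1 = (Sum.inl ee.2.2, tTgt tt) := by
        intro j uu ss hj
        have hm := (hpath j).1
        simp only [prodGame, Set.mem_setOf_eq] at hm
        rcases hm with ⟨ee, heG, s', hed⟩ | ⟨tt, htA, htG, hed⟩
        · rw [hed] at hj
          simp only [Prod.mk.injEq, Sum.inl.injEq] at hj
          obtain ⟨h1, h2⟩ := hj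
          have hj1 : (wt (j + 1)).1 = (Sum.inr ee, ss) := by
            rw [← (hpath j).2, hed, h2]
          have hm2 := (hpath (j + 1)).1
          simp only [prodGame, Set.mem_setOf_eq] at hm2
          rcases hm2 with ⟨ee2, he2G, s2, hed2⟩ | ⟨tt, htA, htG, hed2⟩
          · rw [hed2] at hj1; simp at hj1
          · rw [hed2] at hj1
            simp only [Prod.mk.injEq, Sum.inr.injEq] at hj1
            obtain ⟨hL, hS⟩ := hj1
            refine ⟨ee, tt, heG, h1, htA, hL, hS, ?_, ?_, ?_⟩
            · rw [hed, h1, h2]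
            · rw [hed2, hL, hS]
            · rw [← (hpath (j + 1)).2, hed2, hL]
        · rw [hed] at hj; simp at hj
      have hsrcAll : ∀ k, ∃ uu ss, (wt (2 * k)).1 = (Sum.inl uu, ss) := by
        intro k
        induction k with
        | zero => exact ⟨G.start, A.init, hstart⟩
        | succ k ih =>
          obtain ⟨uu, ss, h⟩ := ih
          obtain ⟨ee, tt, -, -, -, -, -, -, -, hnext⟩ := step2 _ _ _ h
          refine ⟨ee.2.2, tTgt tt, ?_⟩
          have h2 : 2 * (k + 1) = 2 * k + 2 := by ring
          rw [h2]; exact hnext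
      choose u s hus using hsrcAll
      choose e t heG h1 htA hlet hsrcT hwe hwt hnext using
        fun k => step2 (2 * k) (u k) (s k) (hus k)
      have h00 : u 0 = G.start ∧ s 0 = A.init := by
        have h0 := hstart.symm.trans (hus 0)
        rw [show (prodGame G A).start = (Sum.inl G.start, A.init) from rfl] at h0
        simp only [Prod.mk.injEq, Sum.inl.injEq] at h0
        exact ⟨h0.1.symm, h0.2.symm⟩
      have hlink : ∀ k, (e k).2.2 = u (k + 1) ∧ tTgt (t k) = s (k + 1) := by
        intro k
        have h2 : 2 * (k + 1) = 2 * k + 2 := by ring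
        have h3 := hus (k + 1)
        rw [h2] at h3
        have h4 := (hnext k).symm.trans h3
        simp only [Prod.mk.injEq, Sum.inl.injEq] at h4
        exact h4
      have hplayG : IsPlay G e := by
        refine ⟨by rw [h1 0, h00.1], fun k => ⟨heG k, ?_⟩⟩
        rw [(hlink k).1]
        exact (h1 (k + 1)).symm
      have harises : ArisesO τ e := by
        refine ⟨hplayG, fun k hk => ?_⟩
        have hu' : u k ∈ G.oddN := by rw [← h1 k]; exact hk
        have hne : ¬ (prodGame G A).evenOwn ((wt (2 * k)).1) := by
          rw [hus k]
          exact fun h => Set.disjoint_right.mp G.disj hu' h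
        have heq := hcons (2 * k) hne
        have h' := (hwe k).symm.trans heq
        have ha := congrArg (fun x : ((ℕ ⊕ Letter) × Q) × ℕ × ((ℕ ⊕ Letter) × Q) => x.1) h'
        have hb := congrArg (fun x : ((ℕ ⊕ Letter) × Q) × ℕ × ((ℕ ⊕ Letter) × Q) => x.2.2.1) h'
        simp only at ha hb
        rw [← ha] at hb
        simp only [getInl, Sum.inr.injEq] at hb
        rw [h1 k]
        exact hb
      have hwPosOdd : e ∈ PosOdd n d := ⟨G, τ, hτ, harises⟩
      have hnotLang : e ∉ Lang A := hSep.2 e hwPosOdd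
      have hF1 : ∀ k, (wt (2 * k)).2.1 = 1 := fun k => by rw [hwe k]
      have hF2 : ∀ k, (wt (2 * k + 1)).2.1 = tPrio (t k) := fun k => by rw [hwt k]
      obtain ⟨p, hpE, hpI, hple⟩ := hmax
      have h1p : 1 ≤ p := hple 1 (fun N => ⟨2 * N, by omega, hF1 N⟩)
      have hp1 : p ≠ 1 := by rintro rfl; simp at hpE
      apply hnotLang
      refine ⟨t, ⟨?_, fun k => ⟨htA k, ?_⟩⟩, hlet, ⟨p, hpE, ?_, ?_⟩⟩
      · rw [hsrcT 0, h00.2]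
      · rw [(hlink k).2]
        exact (hsrcT (k + 1)).symm
      · intro N
        obtain ⟨j, hjN, hjp⟩ := hpI (2 * N + 1)
        simp only at hjp
        rcases Nat.even_or_odd j with ⟨k, hk⟩ | ⟨k, hk⟩
        · exfalso
          apply hp1
          rw [← hjp]
          have hj2 : j = 2 * k := by omega
          rw [hj2, hF1 k]
        · refine ⟨k, by omega, ?_⟩
          show tPrio (t k) = p
          rw [← hF2 k]
          have hj2 : 2 * k + 1 = j := by omega
          rw [hj2, hjp]
      · intro q hq
        apply hple
        intro N
        obtain ⟨k, hkN, hkq⟩ := hq N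
        refine ⟨2 * k + 1, by omega, ?_⟩
        show (wt (2 * k + 1)).2.1 = q
        rw [hF2 k]
        exact hkq
  exact ⟨hOdd, oddWins_not_evenWins hOdd⟩

end PGSep
end

section
/- Let n and d be positive integers, let G be a game graph with n nodes and priorities up to d, let τ be a positional winning strategy for Even in G, and let A be a nondeterministic parity automaton over Σ_{n,d} that has a transition strategy σ winning for the set of all plays in G arising from τ. Then Even has a winning strategy in the synchronized product G×A. -/
namespace PGSep

/-! Even plays `τ` at the nodes of `G` and `σ` at the edge nodes `(e, s)`, where the letters
read so far are recovered from the history. A play consistent with this strategy interleaves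
a play of `G` arising from `τ` with the run of `A` that `σ` builds on it; the interleaved
moves have priority `1`, which is at most every priority of `A`, so the largest priority seen
infinitely often is that of the run, which is even. -/

theorem MaxInfOftEven.interleave {f g : ℕ → ℕ} {c : ℕ} (hf : MaxInfOftEven f)
    (hc : ∀ k, c ≤ f k) (hg : ∀ k, g (2 * k) = c ∧ g (2 * k + 1) = f k) :
    MaxInfOftEven g := by
  obtain ⟨p, hp, hfp, hmax⟩ := hf
  refine ⟨p, hp, fun N => ?_, fun q hq => ?_⟩
  · obtain ⟨k, hk, hkp⟩ := hfp N
    exact ⟨2 * k + 1, by omega, (hg k).2.trans hkp⟩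
  by_cases hqc : q = c
  · obtain ⟨k, -, hkp⟩ := hfp 0
    exact hqc ▸ hkp ▸ hc k
  refine hmax q fun N => ?_
  obtain ⟨m, hm, hmq⟩ := hq (2 * N + 1)
  obtain ⟨k, rfl | rfl⟩ := Nat.even_or_odd' m
  · exact absurd ((hg k).1.symm.trans hmq) (Ne.symm hqc)
  · exact ⟨k, by omega, (hg k).2.symm.trans hmq⟩

theorem TransStrat.followRun_eq_of_isRun {n d : ℕ} {Q : Type*} {A : Automaton Q}
    (σ : TransStrat n d A) {u : Word} {ρ : ℕ → Trans Q} (hρ : IsRun A ρ)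
    (hσ : ∀ k, ρ k = σ.app ((List.range k).map u) (tSrc (ρ k)) (u k)) :
    followRun A σ u = ρ := by
  have hstate : ∀ k, stateAt A σ u k = tSrc (ρ k) := by
    intro k
    induction k with
    | zero => exact hρ.1.symm
    | succ k ih => rw [stateAt, ih, ← hσ k, (hρ.2 k).2]
  funext k
  rw [followRun, hstate k, ← hσ k]

section FinPath

variable {V : Type*} {E : Set (V × ℕ × V)}

def lastNode (u : V) : List (V × ℕ × V) → V
  | [] => u
  | e :: l => lastNode e.2.2 l

theorem IsFinPath.lastNode_eq {u v : V} {l : List (V × ℕ × V)} (h : IsFinPath E u l v) :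
    lastNode u l = v := by
  induction l generalizing u with
  | nil => exact h
  | cons e l ih => exact ih h.2.2

theorem IsFinPath.eq_or_exists_edge {u v : V} {l : List (V × ℕ × V)}
    (h : IsFinPath E u l v) : v = u ∨ ∃ ed ∈ E, ed.2.2 = v := by
  induction l generalizing u with
  | nil => exact Or.inl h.symm
  | cons e l ih => exact (ih h.2.2).elim (fun hv => Or.inr ⟨e, h.1, hv.symm⟩) Or.inr

theorem lastNode_append_singleton (u : V) (l : List (V × ℕ × V)) (e : V × ℕ × V) :
    lastNode u (l ++ [e]) = e.2.2 := by
  induction l generalizing u with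
  | nil => rfl
  | cons e' l ih => exact ih _

theorem lastNode_range_map {w : ℕ → V × ℕ × V} (hw : IsPathSeq E w) (k : ℕ) :
    lastNode (w 0).1 ((List.range k).map w) = (w k).1 := by
  induction k with
  | zero => rfl
  | succ k ih =>
    rw [List.range_succ, List.map_append, List.map_singleton, lastNode_append_singleton,
      (hw k).2]

end FinPath

section Product

variable {n d : ℕ} {Q : Type*} {G : GameGraph n d} {A : Automaton Q}

abbrev ProdEdge (Q : Type*) : Type _ := ((ℕ ⊕ Letter) × Q) × ℕ × ((ℕ ⊕ Letter) × Q)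

def moveEdge (e : Letter) (s : Q) : ProdEdge Q := ((Sum.inl e.1, s), 1, (Sum.inr e, s))

def transEdge (t : Trans Q) : ProdEdge Q :=
  ((Sum.inr (tLetter t), tSrc t), tPrio t, (Sum.inl (tLetter t).2.2, tTgt t))

theorem mem_prodGame_edges {ed : ProdEdge Q} :
    ed ∈ (prodGame G A).edges ↔ (∃ e ∈ G.edges, ∃ s, ed = moveEdge e s) ∨
      ∃ t ∈ A.trans, tLetter t ∈ G.edges ∧ ed = transEdge t :=
  Iff.rfl

theorem moveEdge_inj {e e' : Letter} {s s' : Q} (h : moveEdge e s = moveEdge e' s') : e = e' := by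
  simp only [moveEdge, Prod.mk.injEq, Sum.inr.injEq] at h
  exact h.2.2.1

theorem transEdge_injective : Function.Injective (transEdge (Q := Q)) := by
  rintro ⟨s, e, p, s'⟩ ⟨r, e', p', r'⟩ h
  simp_all [transEdge, tLetter, tSrc, tPrio, tTgt]

theorem prodGame_target_inr {l : List (ProdEdge Q)} {e : Letter} {s : Q}
    (h : IsFinPath (prodGame G A).edges (prodGame G A).start l (Sum.inr e, s)) :
    e ∈ G.edges := by
  rcases h.eq_or_exists_edge with hstart | ⟨ed, hed, htgt⟩
  · simp [prodGame] at hstart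
  rcases mem_prodGame_edges.1 hed with ⟨e', he', s', rfl⟩ | ⟨t, -, -, rfl⟩
  · simp only [moveEdge, Prod.mk.injEq, Sum.inr.injEq] at htgt
    exact htgt.1 ▸ he'
  · simp [transEdge] at htgt

theorem prodGame_round {w : ℕ → ProdEdge Q} (hw : IsPathSeq (prodGame G A).edges w) {j : ℕ}
    {v : ℕ} {s : Q} (hj : (w j).1 = (Sum.inl v, s)) :
    ∃ t ∈ A.trans, tLetter t ∈ G.edges ∧ w j = moveEdge (tLetter t) (tSrc t) ∧
      w (j + 1) = transEdge t := by
  rcases mem_prodGame_edges.1 (hw j).1 with ⟨e, -, s', hmove⟩ | ⟨t, -, -, htrans⟩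
  · have hnext : (w (j + 1)).1 = (Sum.inr e, s') := by rw [← (hw j).2, hmove]; rfl
    rcases mem_prodGame_edges.1 (hw (j + 1)).1 with ⟨_, -, _, hmove'⟩ | ⟨t, ht, htG, htrans⟩
    · simp [hmove', moveEdge] at hnext
    · simp only [htrans, transEdge, Prod.mk.injEq, Sum.inr.injEq] at hnext
      obtain ⟨rfl, rfl⟩ := hnext
      exact ⟨t, ht, htG, hmove, htrans⟩
  · simp [htrans, transEdge] at hj

theorem prodGame_isPlay_decompose {w : ℕ → ProdEdge Q} (hw : (prodGame G A).IsPlay w) :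
    ∃ ρ : ℕ → Trans Q, IsRun A ρ ∧ IsPlay G (fun k => tLetter (ρ k)) ∧
      ∀ k, w (2 * k) = moveEdge (tLetter (ρ k)) (tSrc (ρ k)) ∧
        w (2 * k + 1) = transEdge (ρ k) := by
  have hinl : ∀ k, ∃ v s, (w (2 * k)).1 = (Sum.inl v, s) := by
    intro k
    induction k with
    | zero => exact ⟨G.start, A.init, hw.1⟩
    | succ k ih =>
      obtain ⟨v, s, hvs⟩ := ih
      obtain ⟨t, -, -, -, hnext⟩ := prodGame_round hw.2 hvs
      exact ⟨_, _, by rw [show 2 * (k + 1) = 2 * k + 1 + 1 by ring, ← (hw.2 _).2, hnext]; rfl⟩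
  choose ρ hρA hρG hw0 hw1 using fun k =>
    prodGame_round hw.2 (hinl k).choose_spec.choose_spec
  have hlink : ∀ k, (tLetter (ρ k)).2.2 = (tLetter (ρ (k + 1))).1 ∧
      tTgt (ρ k) = tSrc (ρ (k + 1)) := by
    intro k
    have h := (hw.2 (2 * k + 1)).2
    rw [hw1 k, show 2 * k + 1 + 1 = 2 * (k + 1) by ring, hw0 (k + 1)] at h
    simpa [transEdge, moveEdge] using h
  have hstart := hw.1
  rw [hw0 0] at hstart
  simp only [moveEdge, prodGame, Prod.mk.injEq, Sum.inl.injEq] at hstart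
  exact ⟨ρ, ⟨hstart.2, fun k => ⟨hρA k, (hlink k).2⟩⟩,
    ⟨hstart.1, fun k => ⟨hρG k, (hlink k).1⟩⟩, fun k => ⟨hw0 k, hw1 k⟩⟩

def lettersRead (l : List (ProdEdge Q)) : List Letter := l.filterMap fun ed => ed.1.1.getRight?

theorem lettersRead_range_map {w : ℕ → ProdEdge Q} {ρ : ℕ → Trans Q}
    (hw : ∀ k, w (2 * k) = moveEdge (tLetter (ρ k)) (tSrc (ρ k)) ∧
      w (2 * k + 1) = transEdge (ρ k)) (k : ℕ) :
    lettersRead ((List.range (2 * k + 1)).map w) = (List.range k).map fun i => tLetter (ρ i) := by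
  induction k with
  | zero => simp [lettersRead, (hw 0).1, moveEdge]
  | succ k ih =>
    rw [show 2 * (k + 1) + 1 = 2 * k + 1 + 1 + 1 by ring, List.range_succ, List.range_succ,
      List.map_append, List.map_append, lettersRead, List.filterMap_append, List.filterMap_append,
      ← lettersRead, ih, show 2 * k + 1 + 1 = 2 * (k + 1) by ring, List.range_succ,
      List.map_append]
    simp [(hw k).2, (hw (k + 1)).1, transEdge, moveEdge]

def prodStrat (τ : EPosStrat G) (σ : TransStrat n d A) (l : List (ProdEdge Q)) : ProdEdge Q :=
  match lastNode (prodGame G A).start l with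
  | (Sum.inl v, s) => moveEdge (τ.choice v) s
  | (Sum.inr e, s) => transEdge (σ.app (lettersRead l) s e)

theorem prodStrat_valid (τ : EPosStrat G) (σ : TransStrat n d A) {l : List (ProdEdge Q)}
    {x : (ℕ ⊕ Letter) × Q} (hl : IsFinPath (prodGame G A).edges (prodGame G A).start l x)
    (hx : (prodGame G A).evenOwn x) :
    prodStrat τ σ l ∈ (prodGame G A).edges ∧ (prodStrat τ σ l).1 = x := by
  rw [prodStrat, hl.lastNode_eq]
  obtain ⟨v | e, s⟩ := x
  · obtain ⟨hmem, hsrc⟩ := τ.mem v hx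
    exact ⟨Or.inl ⟨_, hmem, s, rfl⟩, by simp [moveEdge, hsrc]⟩
  · have he := prodGame_target_inr hl
    obtain ⟨htr, hsrc, hlet⟩ := σ.valid (lettersRead l) s e (G.edges_alph e he)
    exact ⟨Or.inr ⟨_, htr, by rwa [hlet], rfl⟩, by simp [transEdge, hsrc, hlet]⟩

theorem prodStrat_winning (hA : ∀ t ∈ A.trans, 1 ≤ tPrio t) (τ : EPosStrat G)
    (σ : TransStrat n d A) (hσ : WinningFor A σ {w | ArisesE τ w}) {w : ℕ → ProdEdge Q}
    (hw : (prodGame G A).IsPlay w)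
    (hcons : ∀ k, (prodGame G A).evenOwn (w k).1 →
      w k = prodStrat τ σ ((List.range k).map w)) :
    MaxInfOftEven fun k => (w k).2.1 := by
  obtain ⟨ρ, hρ, hplay, hround⟩ := prodGame_isPlay_decompose hw
  set u : Word := fun k => tLetter (ρ k)
  have hstrat : ∀ k, prodStrat τ σ ((List.range k).map w) =
      match (w k).1 with
      | (Sum.inl v, s) => moveEdge (τ.choice v) s
      | (Sum.inr e, s) => transEdge (σ.app (lettersRead ((List.range k).map w)) s e) := by
    intro k
    rw [prodStrat, ← hw.1, lastNode_range_map hw.2]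
  have hρσ : ∀ k, ρ k = σ.app ((List.range k).map u) (tSrc (ρ k)) (u k) := by
    intro k
    have h := hcons (2 * k + 1) (by rw [(hround k).2]; trivial)
    rw [hstrat, (hround k).2, lettersRead_range_map hround] at h
    exact transEdge_injective h
  have harise : ArisesE τ u := by
    refine ⟨hplay, fun k hk => ?_⟩
    have h := hcons (2 * k) (by rw [(hround k).1]; exact hk)
    rw [hstrat, (hround k).1] at h
    exact moveEdge_inj h
  have hacc : MaxInfOftEven fun k => tPrio (ρ k) := by
    simpa only [Accepting, σ.followRun_eq_of_isRun hρ hρσ] using hσ u harise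
  exact hacc.interleave (fun k => hA _ (hρ.2 k).1)
    fun k => ⟨congrArg (·.2.1) (hround k).1, congrArg (·.2.1) (hround k).2⟩

end Product

theorem transition_strategy_even_wins_product_general (n d : ℕ)
    (G : GameGraph n d) {Q : Type} (A : Automaton Q) (d' : ℕ)
    (hA : IsParityAutomaton n d d' A) (τ : EPosStrat G)
    (σ : TransStrat n d A) (hσ : WinningFor A σ {w | ArisesE τ w}) :
    EvenWins (prodGame G A) :=
  ⟨prodStrat τ σ, fun _ _ hl hx => prodStrat_valid τ σ hl hx,
    fun _ hw hcons => prodStrat_winning (fun t ht => (hA.1 t ht).2.1) τ σ hσ hw hcons⟩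

/-- If `τ` is a positional winning strategy for Even in `G` and the
automaton `A` has a transition strategy `σ` winning for the plays of `G` arising
from `τ`, then Even has a winning strategy in the synchronized product `G × A`. -/
theorem transition_strategy_even_wins_product (n d : ℕ) (hn : 1 ≤ n) (hd : 1 ≤ d)
    (G : GameGraph n d) {Q : Type} [Finite Q] (A : Automaton Q) (d' : ℕ)
    (hA : IsParityAutomaton n d d' A) (τ : EPosStrat G) (hτ : EWinningPos τ)
    (σ : TransStrat n d A) (hσ : WinningFor A σ {w | ArisesE τ w}) :
    EvenWins (prodGame G A) :=
  transition_strategy_even_wins_product_general n d G A d' hA τ σ hσ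

end PGSep
end
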